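/- For every smooth compactly supported function u on ℝⁿ (n ≥ 2) and every R > 0, R^{(n−1)/2}‖u(R·)‖_{L²(S^{n−1})} ≤ √2 · ‖∂_r u‖_{L²(ℝⁿ)}^{1/2} ‖u‖_{L²(ℝⁿ)}^{1/2}. -/

import Mathlib

open MeasureTheory

/-- The `L²` norm on the unit sphere of the restriction `ω ↦ u (R • ω)`,
with respect to the natural sphere measure `volume.toSphere`. -/
noncomputable def sphereLpNorm (n : ℕ) (p : ℝ) (u : EuclideanSpace ℝ (Fin n) → ℝ)
    (R : ℝ) : ℝ :=
  (∫ ω : Metric.sphere (0 : EuclideanSpace ℝ (Fin n)) 1,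
      |u (R • (ω : EuclideanSpace ℝ (Fin n)))| ^ p
    ∂((volume : Measure (EuclideanSpace ℝ (Fin n))).toSphere)) ^ (1 / p)

/-- The radial derivative `∂_r u (x) = (x/‖x‖) · ∇u (x)`. -/
noncomputable def radialDeriv (n : ℕ) (u : EuclideanSpace ℝ (Fin n) → ℝ)
    (x : EuclideanSpace ℝ (Fin n)) : ℝ :=
  fderiv ℝ u x (‖x‖⁻¹ • x)

section Aux

open Set Metric

noncomputable def sphProd (n : ℕ) (f : EuclideanSpace ℝ (Fin n) → ℝ) :
    (sphere (0 : EuclideanSpace ℝ (Fin n)) 1 × Ioi (0:ℝ)) → ℝ :=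
  fun p => f (p.2.1 • p.1.1)

variable {n : ℕ}

lemma euclid_nontrivial (hn : n ≠ 0) : Nontrivial (EuclideanSpace ℝ (Fin n)) := by
  haveI : Nonempty (Fin n) := ⟨⟨0, Nat.pos_of_ne_zero hn⟩⟩
  infer_instance

lemma sphProd_integrable (f : EuclideanSpace ℝ (Fin n) → ℝ) (hf : Integrable f) :
    Integrable (sphProd n f)
      ((volume : Measure (EuclideanSpace ℝ (Fin n))).toSphere.prod
        (Measure.volumeIoiPow (Module.finrank ℝ (EuclideanSpace ℝ (Fin n)) - 1))) := by
  rw [← (Measure.measurePreserving_homeomorphUnitSphereProd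
      (volume : Measure (EuclideanSpace ℝ (Fin n)))).integrable_comp_emb
      (Homeomorph.measurableEmbedding _)]
  have heq : (sphProd n f) ∘ (homeomorphUnitSphereProd (EuclideanSpace ℝ (Fin n))) =
      fun x : ({0}ᶜ : Set (EuclideanSpace ℝ (Fin n))) => f x.1 := by
    ext x
    simp only [Function.comp_apply, sphProd, homeomorphUnitSphereProd_apply_snd_coe,
      homeomorphUnitSphereProd_apply_fst_coe]
    rw [smul_inv_smul₀ (norm_ne_zero_iff.2 x.2)]
  rw [heq]
  have hm := (measurableSet_singleton (0 : EuclideanSpace ℝ (Fin n))).compl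
  have h : Integrable f (((volume : Measure (EuclideanSpace ℝ (Fin n))).comap
      Subtype.val).map Subtype.val) ↔ Integrable (f ∘ Subtype.val)
      ((volume : Measure (EuclideanSpace ℝ (Fin n))).comap Subtype.val) :=
    (MeasurableEmbedding.subtype_coe hm).integrable_map_iff
  rw [map_comap_subtype_coe hm] at h
  exact h.mp hf.integrableOn

lemma polar_eq (hn : n ≠ 0) (f : EuclideanSpace ℝ (Fin n) → ℝ) :
    ∫ x, f x = ∫ p, sphProd n f p
      ∂((volume : Measure (EuclideanSpace ℝ (Fin n))).toSphere.prod
        (Measure.volumeIoiPow (Module.finrank ℝ (EuclideanSpace ℝ (Fin n)) - 1))) := by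
  haveI := euclid_nontrivial hn
  rw [← (Measure.measurePreserving_homeomorphUnitSphereProd
      (volume : Measure (EuclideanSpace ℝ (Fin n)))).integral_comp
      (Homeomorph.measurableEmbedding _) (sphProd n f)]
  have heq : ∀ x : ({0}ᶜ : Set (EuclideanSpace ℝ (Fin n))),
      sphProd n f ((homeomorphUnitSphereProd (EuclideanSpace ℝ (Fin n))) x) = f x.1 := by
    intro x
    simp only [sphProd, homeomorphUnitSphereProd_apply_snd_coe,
      homeomorphUnitSphereProd_apply_fst_coe]
    rw [smul_inv_smul₀ (norm_ne_zero_iff.2 x.2)]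
  simp_rw [heq]
  rw [integral_subtype_comap (measurableSet_singleton 0).compl, restrict_compl_singleton]

lemma inner_polar_eq (f : EuclideanSpace ℝ (Fin n) → ℝ)
    (ω : sphere (0 : EuclideanSpace ℝ (Fin n)) 1) :
    ∫ r : Ioi (0:ℝ), sphProd n f (ω, r)
        ∂(Measure.volumeIoiPow (Module.finrank ℝ (EuclideanSpace ℝ (Fin n)) - 1)) =
      ∫ r in Ioi (0:ℝ), r ^ (Module.finrank ℝ (EuclideanSpace ℝ (Fin n)) - 1) *
        f (r • (ω : EuclideanSpace ℝ (Fin n))) := by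
  set m := Module.finrank ℝ (EuclideanSpace ℝ (Fin n)) - 1 with hm
  simp only [Measure.volumeIoiPow, ENNReal.ofReal, sphProd]
  rw [integral_withDensity_eq_integral_smul
    ((measurable_subtype_coe.pow_const _).real_toNNReal),
    integral_subtype_comap measurableSet_Ioi
      (fun a : ℝ => Real.toNNReal (a ^ m) • f (a • (ω : EuclideanSpace ℝ (Fin n))))]
  refine setIntegral_congr_fun measurableSet_Ioi fun x hx => ?_
  rw [NNReal.smul_def, Real.coe_toNNReal _ (pow_nonneg (le_of_lt hx) _), smul_eq_mul]

lemma ftc_bound (u : EuclideanSpace ℝ (Fin n) → ℝ) (hu : ContDiff ℝ (⊤ : ℕ∞) u)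
    (hsupp : HasCompactSupport u) {R : ℝ} (hR : 0 < R)
    (ω : sphere (0 : EuclideanSpace ℝ (Fin n)) 1) :
    R ^ (n - 1) * (u (R • (ω : EuclideanSpace ℝ (Fin n)))) ^ 2 ≤
      ∫ r in Ioi (0:ℝ), r ^ (n - 1) *
        (2 * |u (r • (ω : EuclideanSpace ℝ (Fin n))) *
          radialDeriv n u (r • (ω : EuclideanSpace ℝ (Fin n)))|) := by
  set c : EuclideanSpace ℝ (Fin n) := (ω : EuclideanSpace ℝ (Fin n)) with hcdef
  have hc : ‖c‖ = 1 := by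
    simpa [hcdef] using mem_sphere_zero_iff_norm.1 ω.2
  set v : ℝ → ℝ := fun r => u (r • c) with hvdef
  set D : ℝ → ℝ := fun r => fderiv ℝ u (r • c) c with hDdef
  have hud : Differentiable ℝ u := hu.differentiable (by simp)
  have hv : ∀ r : ℝ, HasDerivAt v (D r) r := by
    intro r
    have h1 : HasDerivAt (fun t : ℝ => t • c) c r := by
      simpa using (hasDerivAt_id r).smul_const c
    exact (hud (r • c)).hasFDerivAt.comp_hasDerivAt r h1
  have hDcont : Continuous D :=
    ((hu.continuous_fderiv (by simp)).comp (continuous_id.smul continuous_const)).clm_apply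
      continuous_const
  have hvcont : Continuous v := hu.continuous.comp (continuous_id.smul continuous_const)
  set g : ℝ → ℝ := fun r => r ^ (n - 1) * (v r) ^ 2 with hgdef
  set g' : ℝ → ℝ := fun r =>
    (↑(n-1) * r ^ (n - 1 - 1)) * (v r) ^ 2 + r ^ (n - 1) * (2 * v r ^ (2-1) * D r) with hg'def
  have hg : ∀ r : ℝ, HasDerivAt g (g' r) r := fun r =>
    (hasDerivAt_pow (n-1) r).mul ((hv r).pow 2)
  have hg'cont : Continuous g' := by
    apply Continuous.add
    · exact (continuous_const.mul (continuous_pow _)).mul (hvcont.pow 2)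
    · exact (continuous_pow _).mul ((continuous_const.mul (hvcont.pow 1)).mul hDcont)
  obtain ⟨M, hM⟩ := hsupp.isCompact.isBounded.subset_closedBall 0
  set T : ℝ := max (R + 1) (M + 1) with hTdef
  have hRT : R ≤ T := le_trans (by linarith) (le_max_left _ _)
  have h0T : 0 < T := lt_of_lt_of_le hR hRT
  have hvT : ∀ r : ℝ, T ≤ r → v r = 0 := by
    intro r hr
    have hru : u (r • c) = 0 := by
      apply image_eq_zero_of_notMem_tsupport
      intro hmem
      have h1 := hM hmem
      rw [mem_closedBall_zero_iff] at h1
      rw [norm_smul, hc, mul_one] at h1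
      have hrM : M + 1 ≤ r := le_trans (le_max_right _ _) hr
      have : r ≤ M := le_trans (le_abs_self r) h1
      linarith
    simpa [hvdef] using hru
  have hftc : ∫ r in R..T, g' r = g T - g R :=
    intervalIntegral.integral_eq_sub_of_hasDerivAt (fun r _ => hg r)
      (hg'cont.intervalIntegrable R T)
  have hgT : g T = 0 := by simp [hgdef, hvT T le_rfl]
  set F : ℝ → ℝ := fun r => r ^ (n - 1) * (2 * |v r * D r|) with hFdef
  have hFcont : Continuous F := (continuous_pow _).mul
    (continuous_const.mul (hvcont.mul hDcont).abs)
  have hFnonneg : ∀ r : ℝ, 0 ≤ r → 0 ≤ F r := by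
    intro r hr
    apply mul_nonneg (pow_nonneg hr _)
    positivity
  have step1 : g R ≤ ∫ r in R..T, F r := by
    have h1 : g R = ∫ r in R..T, -g' r := by
      rw [intervalIntegral.integral_neg, hftc, hgT]; ring
    rw [h1]
    apply intervalIntegral.integral_mono_on hRT
      ((hg'cont.neg).intervalIntegrable R T) (hFcont.intervalIntegrable R T)
    intro r hr
    have hr0 : 0 < r := lt_of_lt_of_le hR hr.1
    have hA : 0 ≤ (↑(n-1) * r ^ (n - 1 - 1)) * (v r) ^ 2 := by positivity
    have hB : -(r ^ (n - 1) * (2 * v r ^ (2-1) * D r)) ≤ F r := by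
      simp only [hFdef, pow_one]
      have h2 : -(2 * v r ^ 1 * D r) ≤ 2 * |v r * D r| := by
        rw [abs_mul]
        nlinarith [neg_abs_le (v r * D r), abs_mul (v r) (D r)]
      calc -(r ^ (n - 1) * (2 * v r ^ (2-1) * D r))
          = r ^ (n-1) * (-(2 * v r ^ 1 * D r)) := by ring_nf
        _ ≤ r ^ (n-1) * (2 * |v r * D r|) :=
            mul_le_mul_of_nonneg_left h2 (pow_nonneg hr0.le _)
    simp only [hg'def]
    calc -((↑(n-1) * r ^ (n - 1 - 1)) * (v r) ^ 2 + r ^ (n - 1) * (2 * v r ^ (2-1) * D r))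
        ≤ -(r ^ (n - 1) * (2 * v r ^ (2-1) * D r)) := by linarith
      _ ≤ F r := hB
  have hFint : IntegrableOn F (Ioi (0:ℝ)) := by
    have hsplit : Ioc (0:ℝ) T ∪ Ioi T = Ioi 0 := Ioc_union_Ioi_eq_Ioi h0T.le
    rw [← hsplit]
    apply IntegrableOn.union
    · exact hFcont.integrableOn_Ioc
    · apply (integrableOn_congr_fun (g := fun _ => (0:ℝ)) ?_ measurableSet_Ioi).2
        (integrableOn_zero)
      intro r hr
      simp only [hFdef, hvT r (le_of_lt hr), zero_mul, abs_zero, mul_zero]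
  have step2 : ∫ r in R..T, F r ≤ ∫ r in Ioi (0:ℝ), F r := by
    rw [intervalIntegral.integral_of_le hRT]
    apply setIntegral_mono_set hFint
    · filter_upwards [ae_restrict_mem measurableSet_Ioi] with r hr
      exact hFnonneg r (le_of_lt hr)
    · exact HasSubset.Subset.eventuallyLE (fun x hx => lt_trans hR hx.1)
  have step3 : ∫ r in Ioi (0:ℝ), F r = ∫ r in Ioi (0:ℝ), r ^ (n - 1) *
      (2 * |u (r • c) * radialDeriv n u (r • c)|) := by
    apply setIntegral_congr_fun measurableSet_Ioi
    intro r hr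
    have hr0 : (0:ℝ) < r := hr
    have hnorm : ‖r • c‖ = r := by rw [norm_smul, hc, mul_one, Real.norm_eq_abs, abs_of_pos hr0]
    have hrad : radialDeriv n u (r • c) = D r := by
      rw [radialDeriv, hnorm, smul_smul, inv_mul_cancel₀ hr0.ne', one_smul]
    simp only [hFdef, hrad, hvdef]
  calc R ^ (n - 1) * (u (R • c)) ^ 2 = g R := rfl
    _ ≤ ∫ r in Ioi (0:ℝ), F r := step1.trans step2
    _ = _ := step3

lemma radial_memL2 (u : EuclideanSpace ℝ (Fin n) → ℝ) (hu : ContDiff ℝ (⊤ : ℕ∞) u)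
    (hsupp : HasCompactSupport u) : MemLp (radialDeriv n u) 2 (volume) := by
  have hw : Continuous (fderiv ℝ u) := hu.continuous_fderiv (by simp)
  have hwsupp : HasCompactSupport (fderiv ℝ u) := hsupp.fderiv ℝ
  have hnorm : MemLp (fun x => ‖fderiv ℝ u x‖) 2
      (volume : Measure (EuclideanSpace ℝ (Fin n))) :=
    hw.norm.memLp_of_hasCompactSupport hwsupp.norm
  have hmeas : AEStronglyMeasurable (radialDeriv n u)
      (volume : Measure (EuclideanSpace ℝ (Fin n))) := by
    have h1 : Measurable fun x : EuclideanSpace ℝ (Fin n) => ‖x‖⁻¹ • x :=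
      (measurable_norm.inv).smul measurable_id
    have h2 : Measurable (radialDeriv n u) :=
      isBoundedBilinearMap_apply.continuous.measurable.comp
        ((hw.measurable).prodMk h1)
    exact h2.aestronglyMeasurable
  apply hnorm.of_le hmeas
  apply Filter.Eventually.of_forall
  intro x
  rw [Real.norm_eq_abs, Real.norm_eq_abs, abs_norm]
  calc |radialDeriv n u x| ≤ ‖fderiv ℝ u x‖ * ‖‖x‖⁻¹ • x‖ :=
        (fderiv ℝ u x).le_opNorm _
    _ ≤ ‖fderiv ℝ u x‖ * 1 := by
        apply mul_le_mul_of_nonneg_left _ (norm_nonneg _)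
        rw [norm_smul, norm_inv, norm_norm]
        rcases eq_or_ne x 0 with h | h
        · simp [h]
        · rw [inv_mul_cancel₀ (norm_ne_zero_iff.2 h)]
    _ = ‖fderiv ℝ u x‖ := mul_one _

lemma cauchy_schwarz_step (u : EuclideanSpace ℝ (Fin n) → ℝ) (hu : ContDiff ℝ (⊤ : ℕ∞) u)
    (hsupp : HasCompactSupport u) :
    ∫ x, |u x * radialDeriv n u x| ≤
      (∫ x, (radialDeriv n u x) ^ 2) ^ ((1:ℝ)/2) * (∫ x, (u x) ^ 2) ^ ((1:ℝ)/2) := by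
  have hu2 : MemLp u 2 (volume : Measure (EuclideanSpace ℝ (Fin n))) :=
    hu.continuous.memLp_of_hasCompactSupport hsupp
  have hv2 := radial_memL2 u hu hsupp
  have hpq : (2:ℝ).HolderConjugate 2 := Real.HolderConjugate.two_two
  have h2 : ENNReal.ofReal (2:ℝ) = 2 := by norm_num
  have hv2' : MemLp (radialDeriv n u) (ENNReal.ofReal 2)
      (volume : Measure (EuclideanSpace ℝ (Fin n))) := by rw [h2]; exact hv2
  have hu2' : MemLp u (ENNReal.ofReal 2)
      (volume : Measure (EuclideanSpace ℝ (Fin n))) := by rw [h2]; exact hu2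
  have key := integral_mul_norm_le_Lp_mul_Lq (μ := (volume : Measure (EuclideanSpace ℝ (Fin n))))
    (f := radialDeriv n u) (g := u) hpq hv2' hu2'
  have hL : ∫ x, |u x * radialDeriv n u x| = ∫ x, ‖radialDeriv n u x‖ * ‖u x‖ := by
    congr 1; funext x
    rw [Real.norm_eq_abs, Real.norm_eq_abs, ← abs_mul, mul_comm]
  have hrw : ∀ f : EuclideanSpace ℝ (Fin n) → ℝ,
      (∫ x, ‖f x‖ ^ (2:ℝ)) = ∫ x, (f x) ^ 2 := by
    intro f; congr 1; funext x
    rw [show ((2:ℝ) = ((2:ℕ):ℝ)) by norm_num, Real.rpow_natCast, Real.norm_eq_abs, sq_abs]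
  rw [hL]
  calc ∫ x, ‖radialDeriv n u x‖ * ‖u x‖
      ≤ (∫ x, ‖radialDeriv n u x‖ ^ (2:ℝ)) ^ ((1:ℝ)/2) * (∫ x, ‖u x‖ ^ (2:ℝ)) ^ ((1:ℝ)/2) := key
    _ = _ := by rw [hrw, hrw]

end Aux

open Set Metric in
theorem trace_inequality_L2 (n : ℕ) (hn : 2 ≤ n)
    (u : EuclideanSpace ℝ (Fin n) → ℝ) (hu : ContDiff ℝ (⊤ : ℕ∞) u)
    (hsupp : HasCompactSupport u) (R : ℝ) (hR : 0 < R) :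
    R ^ (((n : ℝ) - 1) / 2) * sphereLpNorm n 2 u R ≤
      Real.sqrt 2 * (∫ x, (radialDeriv n u x) ^ 2) ^ ((1 : ℝ) / 4) *
        (∫ x, (u x) ^ 2) ^ ((1 : ℝ) / 4) := by
  have hn0 : n ≠ 0 := by omega
  haveI := euclid_nontrivial hn0
  set σ := (volume : Measure (EuclideanSpace ℝ (Fin n))).toSphere with hσ
  set f : EuclideanSpace ℝ (Fin n) → ℝ := fun x => 2 * |u x * radialDeriv n u x| with hfdef
  -- integrability of f
  have hu2 : MemLp u 2 (volume : Measure (EuclideanSpace ℝ (Fin n))) :=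
    hu.continuous.memLp_of_hasCompactSupport hsupp
  have hv2 := radial_memL2 u hu hsupp
  have hmul : Integrable (fun x => u x * radialDeriv n u x)
      (volume : Measure (EuclideanSpace ℝ (Fin n))) := by
    apply Integrable.mono' (hu2.integrable_sq.add hv2.integrable_sq)
      (hu2.aestronglyMeasurable.mul hv2.aestronglyMeasurable)
    apply Filter.Eventually.of_forall
    intro x
    simp only [Pi.add_apply, Pi.mul_apply, Real.norm_eq_abs, abs_mul]
    nlinarith [sq_nonneg (|u x| - |radialDeriv n u x|), abs_nonneg (u x),
      abs_nonneg (radialDeriv n u x), sq_abs (u x), sq_abs (radialDeriv n u x)]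
  have hf_int : Integrable f (volume : Measure (EuclideanSpace ℝ (Fin n))) :=
    (hmul.abs).const_mul 2
  have hprod := sphProd_integrable f hf_int
  set h : sphere (0 : EuclideanSpace ℝ (Fin n)) 1 → ℝ := fun ω =>
    ∫ r : Ioi (0:ℝ), sphProd n f (ω, r)
      ∂(Measure.volumeIoiPow (Module.finrank ℝ (EuclideanSpace ℝ (Fin n)) - 1)) with hhdef
  have h_int : Integrable h σ := hprod.integral_prod_left
  have hpolar : ∫ x, f x = ∫ ω, h ω ∂σ :=
    (polar_eq hn0 f).trans (integral_prod _ hprod)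
  have hfr : Module.finrank ℝ (EuclideanSpace ℝ (Fin n)) = n := finrank_euclideanSpace_fin
  have hinner : ∀ ω : sphere (0 : EuclideanSpace ℝ (Fin n)) 1,
      h ω = ∫ r in Ioi (0:ℝ), r ^ (n - 1) * f (r • (ω : EuclideanSpace ℝ (Fin n))) := by
    intro ω
    show (∫ r : Ioi (0:ℝ), sphProd n f (ω, r)
      ∂(Measure.volumeIoiPow (Module.finrank ℝ (EuclideanSpace ℝ (Fin n)) - 1))) = _
    rw [inner_polar_eq f ω, hfr]
  -- the restriction to the sphere
  set s : sphere (0 : EuclideanSpace ℝ (Fin n)) 1 → ℝ := fun ω =>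
    R ^ (n - 1) * (u (R • (ω : EuclideanSpace ℝ (Fin n)))) ^ 2 with hsdef
  have s_cont : Continuous s := by
    apply continuous_const.mul
    exact ((hu.continuous.comp ((continuous_const : Continuous fun _ : sphere (0 : EuclideanSpace ℝ (Fin n)) 1 => R).smul continuous_subtype_val)).pow 2)
  haveI : CompactSpace (sphere (0 : EuclideanSpace ℝ (Fin n)) 1) :=
    isCompact_iff_compactSpace.mp (isCompact_sphere 0 1)
  have s_supp : HasCompactSupport s :=
    IsCompact.of_isClosed_subset isCompact_univ (isClosed_tsupport s) (Set.subset_univ _)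
  have s_int : Integrable s σ := s_cont.integrable_of_hasCompactSupport s_supp
  have hmono : ∫ ω, s ω ∂σ ≤ ∫ ω, h ω ∂σ := by
    apply integral_mono s_int h_int
    intro ω
    rw [hinner ω]
    exact ftc_bound u hu hsupp hR ω
  set A : ℝ := ∫ ω, (u (R • (ω : EuclideanSpace ℝ (Fin n)))) ^ 2 ∂σ with hAdef
  set B : ℝ := ∫ x, (radialDeriv n u x) ^ 2 with hBdef
  set C : ℝ := ∫ x, (u x) ^ 2 with hCdef
  have hA0 : 0 ≤ A := integral_nonneg fun ω => sq_nonneg _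
  have hB0 : 0 ≤ B := integral_nonneg fun x => sq_nonneg _
  have hC0 : 0 ≤ C := integral_nonneg fun x => sq_nonneg _
  have hsA : ∫ ω, s ω ∂σ = R ^ (n - 1) * A := by
    simp only [hsdef, hAdef]; exact integral_const_mul _ _
  have hfI : ∫ x, f x = 2 * ∫ x, |u x * radialDeriv n u x| := by
    simp only [hfdef]; exact integral_const_mul _ _
  have key : R ^ (n - 1) * A ≤ 2 * (B ^ ((1:ℝ)/2) * C ^ ((1:ℝ)/2)) := by
    have h1 := cauchy_schwarz_step u hu hsupp
    calc R ^ (n - 1) * A = ∫ ω, s ω ∂σ := hsA.symm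
      _ ≤ ∫ ω, h ω ∂σ := hmono
      _ = ∫ x, f x := hpolar.symm
      _ = 2 * ∫ x, |u x * radialDeriv n u x| := hfI
      _ ≤ 2 * (B ^ ((1:ℝ)/2) * C ^ ((1:ℝ)/2)) := by
          apply mul_le_mul_of_nonneg_left _ (by norm_num)
          exact h1
  -- take square roots
  have hpow : (R ^ (n-1) * A) ^ ((1:ℝ)/2) ≤
      (2 * (B ^ ((1:ℝ)/2) * C ^ ((1:ℝ)/2))) ^ ((1:ℝ)/2) :=
    Real.rpow_le_rpow (by positivity) key (by norm_num)
  have hsph : sphereLpNorm n 2 u R = A ^ ((1:ℝ)/2) := by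
    rw [sphereLpNorm]
    have hAe : (∫ ω : sphere (0 : EuclideanSpace ℝ (Fin n)) 1,
        |u (R • (ω : EuclideanSpace ℝ (Fin n)))| ^ (2:ℝ)
        ∂((volume : Measure (EuclideanSpace ℝ (Fin n))).toSphere)) = A := by
      rw [hAdef]
      apply integral_congr_ae
      apply Filter.Eventually.of_forall
      intro ω
      simp only [show ((2:ℝ) = ((2:ℕ):ℝ)) by norm_num, Real.rpow_natCast, sq_abs]
    rw [hAe]
  have hcast : ((n - 1 : ℕ) : ℝ) = (n : ℝ) - 1 := by
    have : (1:ℕ) ≤ n := by omega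
    push_cast [this]
    ring
  have hlhs : (R ^ (n-1) * A) ^ ((1:ℝ)/2) =
      R ^ (((n:ℝ) - 1) / 2) * A ^ ((1:ℝ)/2) := by
    rw [Real.mul_rpow (pow_nonneg hR.le _) hA0, ← Real.rpow_natCast R (n-1),
      ← Real.rpow_mul hR.le, hcast,
      show ((n:ℝ) - 1) * (1/2) = ((n:ℝ) - 1) / 2 from by ring]
  have hrhs : (2 * (B ^ ((1:ℝ)/2) * C ^ ((1:ℝ)/2))) ^ ((1:ℝ)/2) =
      Real.sqrt 2 * B ^ ((1:ℝ)/4) * C ^ ((1:ℝ)/4) := by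
    rw [Real.mul_rpow (by norm_num) (by positivity),
      Real.mul_rpow (Real.rpow_nonneg hB0 _) (Real.rpow_nonneg hC0 _),
      ← Real.rpow_mul hB0, ← Real.rpow_mul hC0, Real.sqrt_eq_rpow,
      show (1:ℝ)/2 * (1/2) = 1/4 from by norm_num]
    ring
  rw [hsph, ← hlhs]
  calc (R ^ (n-1) * A) ^ ((1:ℝ)/2)
      ≤ (2 * (B ^ ((1:ℝ)/2) * C ^ ((1:ℝ)/2))) ^ ((1:ℝ)/2) := hpow
    _ = Real.sqrt 2 * B ^ ((1:ℝ)/4) * C ^ ((1:ℝ)/4) := hrhs
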